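/- arXiv:0705.0250 — 8 statements merged into one kernel-verified Lean document; each statement's English description precedes it below -/
import Mathlib

section
/- Let F : ℝ^{n+1} → Λ be continuously differentiable. Then pointwise on ℝ^{n+1}: m(d_{t,x}F) + d_{t,x}(mF) = ∂₀F and m(d*_{t,x}F) + d*_{t,x}(mF) = −∂₀F, where ∂₀ is the partial derivative with respect to the 0-th (vertical) coordinate. -/
open Finset

noncomputable section

/-- The exterior algebra `Λ` of `ℂ^{n+1}`, modelled by coefficient functions with
respect to the standard basis `{e_s : s ⊆ {0,…,n}}`. -/
abbrev Lam (n : ℕ) := Finset (Fin (n + 1)) → ℂ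

/-- The counting function `σ(s,t) := #{(s_i,t_j) ∈ s×t : s_i > t_j}`. -/
def sigCount {n : ℕ} (s t : Finset (Fin (n + 1))) : ℕ :=
  ((s ×ˢ t).filter fun p => p.2 < p.1).card

/-- The exterior product. -/
def wedge {n : ℕ} (f g : Lam n) : Lam n := fun u =>
  ∑ s ∈ u.powerset, (-1 : ℂ) ^ sigCount s (u \ s) * f s * g (u \ s)

/-- The (left) interior product. -/
def iprod {n : ℕ} (f g : Lam n) : Lam n := fun u =>
  ∑ s : Finset (Fin (n + 1)),
    if Disjoint s u then (-1 : ℂ) ^ sigCount s u * f s * g (s ∪ u) else 0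

/-- The basis vector `e_j` as a multivector. -/
def basisVec {n : ℕ} (j : Fin (n + 1)) : Lam n := fun s => if s = {j} then 1 else 0

/-- `m f := e₀ ∧ f + e₀ ⌟ f`. -/
def mOp {n : ℕ} (f : Lam n) : Lam n :=
  wedge (basisVec 0) f + iprod (basisVec 0) f

/-- The partial derivative `∂_j F` in the `j`-th coordinate direction of `ℝ^{n+1}`. -/
def pderiv {n : ℕ} (j : Fin (n + 1)) (F : (Fin (n + 1) → ℝ) → Lam n)
    (x : Fin (n + 1) → ℝ) : Lam n :=
  fderiv ℝ F x (Pi.single j 1)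

/-- The exterior derivative `d_{t,x} F := Σ_{j=0}^n e_j ∧ ∂_j F`. -/
def dtx {n : ℕ} (F : (Fin (n + 1) → ℝ) → Lam n) (x : Fin (n + 1) → ℝ) : Lam n :=
  ∑ j : Fin (n + 1), wedge (basisVec j) (pderiv j F x)

/-- The interior derivative `d*_{t,x} F := −Σ_{j=0}^n e_j ⌟ ∂_j F`. -/
def dstx {n : ℕ} (F : (Fin (n + 1) → ℝ) → Lam n) (x : Fin (n + 1) → ℝ) : Lam n :=
  -∑ j : Fin (n + 1), iprod (basisVec j) (pderiv j F x)

/-!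
Both identities come from the Clifford relations `e_i ∧ e_j ∧ + e_j ∧ e_i ∧ = 0`,
`e_i ⌟ e_j ⌟ + e_j ⌟ e_i ⌟ = 0` and `e_i ⌟ e_j ∧ + e_j ∧ e_i ⌟ = δ_ij`, checked coefficientwise:
`e_j ∧` and `e_j ⌟` remove, resp. insert, `j` in the index set, with the sign `(-1)^#{k < j}`.
Taking `i = 0`, `m = e₀ ∧ + e₀ ⌟` anticommutes with `e_j ∧` and with `e_j ⌟` up to `δ_0j`.
As `m` is linear it commutes with `∂_j`, so in `m d + d m` and `m d* + d* m` only the `j = 0`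
term survives.
-/

section Clifford

variable {n : ℕ}

lemma sigCount_singleton_left (j : Fin (n + 1)) (t : Finset (Fin (n + 1))) :
    sigCount {j} t = #(t.filter (· < j)) := by
  rw [sigCount, singleton_product, filter_map, card_map]
  rfl

lemma card_filter_lt_insert {i : Fin (n + 1)} {s : Finset (Fin (n + 1))} (hi : i ∉ s)
    (j : Fin (n + 1)) :
    #((insert i s).filter (· < j)) = #(s.filter (· < j)) + if i < j then 1 else 0 := by
  rw [filter_insert]
  split_ifs <;> simp [card_insert_of_notMem, hi]

lemma wedge_basisVec_apply (j : Fin (n + 1)) (f : Lam n) (u : Finset (Fin (n + 1))) :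
    wedge (basisVec j) f u =
      if j ∈ u then (-1 : ℂ) ^ #((u.erase j).filter (· < j)) * f (u.erase j) else 0 := by
  simp only [wedge, basisVec, mul_ite, mul_one, mul_zero, ite_mul, zero_mul]
  rw [sum_ite_eq' u.powerset {j} fun s => (-1 : ℂ) ^ sigCount s (u \ s) * f (u \ s)]
  simp [singleton_subset_iff, sigCount_singleton_left, sdiff_singleton_eq_erase]

lemma wedge_basisVec_apply_insert {j : Fin (n + 1)} {t : Finset (Fin (n + 1))} (hj : j ∉ t)
    (f : Lam n) :
    wedge (basisVec j) f (insert j t) = (-1 : ℂ) ^ #(t.filter (· < j)) * f t := by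
  simp [wedge_basisVec_apply, erase_insert hj]

lemma wedge_basisVec_apply_of_notMem {j : Fin (n + 1)} {u : Finset (Fin (n + 1))} (hj : j ∉ u)
    (f : Lam n) : wedge (basisVec j) f u = 0 := by
  simp [wedge_basisVec_apply, hj]

lemma iprod_basisVec_apply (j : Fin (n + 1)) (f : Lam n) (u : Finset (Fin (n + 1))) :
    iprod (basisVec j) f u =
      if j ∈ u then 0 else (-1 : ℂ) ^ #(u.filter (· < j)) * f (insert j u) := by
  rw [iprod, Fintype.sum_eq_single {j} fun s hs => by simp [basisVec, hs]]
  by_cases hj : j ∈ u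
  · simp [hj]
  · simp [basisVec, hj, sigCount_singleton_left]

lemma iprod_basisVec_apply_of_notMem {j : Fin (n + 1)} {u : Finset (Fin (n + 1))} (hj : j ∉ u)
    (f : Lam n) :
    iprod (basisVec j) f u = (-1 : ℂ) ^ #(u.filter (· < j)) * f (insert j u) := by
  simp [iprod_basisVec_apply, hj]

lemma iprod_basisVec_apply_of_mem {j : Fin (n + 1)} {u : Finset (Fin (n + 1))} (hj : j ∈ u)
    (f : Lam n) : iprod (basisVec j) f u = 0 := by
  simp [iprod_basisVec_apply, hj]

lemma wedge_basisVec_wedge_basisVec_apply_eq_zero {i j : Fin (n + 1)} {u : Finset (Fin (n + 1))}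
    (h : i ∉ u ∨ j ∉ u) (f : Lam n) :
    wedge (basisVec i) (wedge (basisVec j) f) u = 0 := by
  rcases h with hi | hj
  · exact wedge_basisVec_apply_of_notMem hi _
  · rw [wedge_basisVec_apply]
    split_ifs
    · rw [wedge_basisVec_apply_of_notMem (fun h => hj (mem_of_mem_erase h)), mul_zero]
    · rfl

lemma wedge_basisVec_wedge_basisVec_self (i : Fin (n + 1)) (f : Lam n) :
    wedge (basisVec i) (wedge (basisVec i) f) = 0 := by
  funext u
  rw [wedge_basisVec_apply]
  split_ifs
  · rw [wedge_basisVec_apply_of_notMem (notMem_erase i u), mul_zero, Pi.zero_apply]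
  · rfl

lemma wedge_basisVec_anticomm (i j : Fin (n + 1)) (f : Lam n) :
    wedge (basisVec i) (wedge (basisVec j) f) + wedge (basisVec j) (wedge (basisVec i) f) = 0 := by
  funext u
  by_cases hij : i = j
  · simp [hij, wedge_basisVec_wedge_basisVec_self]
  by_cases hu : i ∈ u ∧ j ∈ u
  · obtain ⟨s, hi, hj, rfl⟩ : ∃ s, i ∉ s ∧ j ∉ s ∧ u = insert i (insert j s) :=
      ⟨(u.erase i).erase j, by simp, by simp,
        by rw [insert_erase (mem_erase.2 ⟨Ne.symm hij, hu.2⟩), insert_erase hu.1]⟩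
    have hji : j ∉ insert i s := by simp [hj, Ne.symm hij]
    have hij' : i ∉ insert j s := by simp [hi, hij]
    rw [Pi.add_apply, wedge_basisVec_apply_insert hij', wedge_basisVec_apply_insert hj, insert_comm,
      wedge_basisVec_apply_insert hji, wedge_basisVec_apply_insert hi, card_filter_lt_insert hj,
      card_filter_lt_insert hi]
    rcases lt_or_gt_of_ne hij with h | h <;> simp [h, h.not_gt, pow_succ] <;> ring
  · rw [not_and_or] at hu
    simp [wedge_basisVec_wedge_basisVec_apply_eq_zero hu,
      wedge_basisVec_wedge_basisVec_apply_eq_zero hu.symm]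

lemma iprod_basisVec_iprod_basisVec_apply_eq_zero {i j : Fin (n + 1)} {u : Finset (Fin (n + 1))}
    (h : i ∈ u ∨ j ∈ u) (f : Lam n) :
    iprod (basisVec i) (iprod (basisVec j) f) u = 0 := by
  by_cases hi : i ∈ u
  · exact iprod_basisVec_apply_of_mem hi _
  · rw [iprod_basisVec_apply_of_notMem hi, iprod_basisVec_apply_of_mem, mul_zero]
    exact mem_insert_of_mem (h.resolve_left hi)

lemma iprod_basisVec_iprod_basisVec_self (i : Fin (n + 1)) (f : Lam n) :
    iprod (basisVec i) (iprod (basisVec i) f) = 0 := by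
  funext u
  by_cases hi : i ∈ u
  · exact iprod_basisVec_apply_of_mem hi _
  · rw [iprod_basisVec_apply_of_notMem hi, iprod_basisVec_apply_of_mem (mem_insert_self i u),
      mul_zero, Pi.zero_apply]

lemma iprod_basisVec_anticomm (i j : Fin (n + 1)) (f : Lam n) :
    iprod (basisVec i) (iprod (basisVec j) f) + iprod (basisVec j) (iprod (basisVec i) f) = 0 := by
  funext u
  by_cases hij : i = j
  · simp [hij, iprod_basisVec_iprod_basisVec_self]
  by_cases hu : i ∈ u ∨ j ∈ u
  · simp [iprod_basisVec_iprod_basisVec_apply_eq_zero hu,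
      iprod_basisVec_iprod_basisVec_apply_eq_zero hu.symm]
  rw [not_or] at hu
  have hji : j ∉ insert i u := by simp [hu.2, Ne.symm hij]
  have hij' : i ∉ insert j u := by simp [hu.1, hij]
  rw [Pi.add_apply, iprod_basisVec_apply_of_notMem hu.1, iprod_basisVec_apply_of_notMem hji,
    iprod_basisVec_apply_of_notMem hu.2, iprod_basisVec_apply_of_notMem hij', insert_comm,
    card_filter_lt_insert hu.1, card_filter_lt_insert hu.2]
  rcases lt_or_gt_of_ne hij with h | h <;> simp [h, h.not_gt, pow_succ] <;> ring

lemma iprod_basisVec_wedge_basisVec_apply_eq_zero {i j : Fin (n + 1)} {u : Finset (Fin (n + 1))}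
    (hij : i ≠ j) (h : i ∈ u ∨ j ∉ u) (f : Lam n) :
    iprod (basisVec i) (wedge (basisVec j) f) u = 0 := by
  by_cases hi : i ∈ u
  · exact iprod_basisVec_apply_of_mem hi _
  · rw [iprod_basisVec_apply_of_notMem hi, wedge_basisVec_apply_of_notMem, mul_zero]
    simp [Ne.symm hij, h.resolve_left hi]

lemma wedge_basisVec_iprod_basisVec_apply_eq_zero {i j : Fin (n + 1)} {u : Finset (Fin (n + 1))}
    (hij : i ≠ j) (h : i ∈ u ∨ j ∉ u) (f : Lam n) :
    wedge (basisVec j) (iprod (basisVec i) f) u = 0 := by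
  by_cases hj : j ∈ u
  · rw [wedge_basisVec_apply, if_pos hj, iprod_basisVec_apply_of_mem, mul_zero]
    simp [hij, h.resolve_right (not_not.2 hj)]
  · exact wedge_basisVec_apply_of_notMem hj _

lemma iprod_basisVec_wedge_basisVec_self_add (i : Fin (n + 1)) (f : Lam n) :
    iprod (basisVec i) (wedge (basisVec i) f) + wedge (basisVec i) (iprod (basisVec i) f) = f := by
  have sign_sq (k : ℕ) : (-1 : ℂ) ^ k * (-1) ^ k = 1 := by rw [← mul_pow]; simp
  funext u
  by_cases hi : i ∈ u
  · obtain ⟨t, ht, rfl⟩ : ∃ t, i ∉ t ∧ u = insert i t :=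
      ⟨u.erase i, notMem_erase i u, (insert_erase hi).symm⟩
    rw [Pi.add_apply, iprod_basisVec_apply_of_mem hi, wedge_basisVec_apply_insert ht,
      iprod_basisVec_apply_of_notMem ht, ← mul_assoc, sign_sq, zero_add, one_mul]
  · rw [Pi.add_apply, iprod_basisVec_apply_of_notMem hi, wedge_basisVec_apply_insert hi,
      wedge_basisVec_apply_of_notMem hi, ← mul_assoc, sign_sq, add_zero, one_mul]

lemma iprod_basisVec_wedge_basisVec_add (i j : Fin (n + 1)) (f : Lam n) :
    iprod (basisVec i) (wedge (basisVec j) f) + wedge (basisVec j) (iprod (basisVec i) f) =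
      if i = j then f else 0 := by
  by_cases hij : i = j
  · rw [if_pos hij, hij, iprod_basisVec_wedge_basisVec_self_add]
  funext u
  by_cases hu : i ∈ u ∨ j ∉ u
  · simp [hij, iprod_basisVec_wedge_basisVec_apply_eq_zero hij hu,
      wedge_basisVec_iprod_basisVec_apply_eq_zero hij hu]
  obtain ⟨hi, hj⟩ : i ∉ u ∧ j ∈ u := by tauto
  obtain ⟨t, ht, rfl⟩ : ∃ t, j ∉ t ∧ u = insert j t :=
    ⟨u.erase j, notMem_erase j u, (insert_erase hj).symm⟩
  have hit : i ∉ t := fun h => hi (mem_insert_of_mem h)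
  have hji : j ∉ insert i t := by simp [ht, Ne.symm hij]
  rw [Pi.add_apply, iprod_basisVec_apply_of_notMem hi, insert_comm, wedge_basisVec_apply_insert hji,
    wedge_basisVec_apply_insert ht, iprod_basisVec_apply_of_notMem hit, card_filter_lt_insert ht,
    card_filter_lt_insert hit, if_neg hij]
  rcases lt_or_gt_of_ne hij with h | h <;> simp [h, h.not_gt, pow_succ] <;> ring

lemma wedge_add_right (f g h : Lam n) : wedge f (g + h) = wedge f g + wedge f h := by
  funext u
  simp [wedge, mul_add, sum_add_distrib]

lemma wedge_smul_right (c : ℂ) (f g : Lam n) : wedge f (c • g) = c • wedge f g := by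
  funext u
  simp only [wedge, Pi.smul_apply, smul_eq_mul, mul_sum]
  exact sum_congr rfl fun s _ => by ring

lemma iprod_add_right (f g h : Lam n) : iprod f (g + h) = iprod f g + iprod f h := by
  funext u
  simp [iprod, ← sum_add_distrib, ← ite_add_zero, mul_add]

lemma iprod_smul_right (c : ℂ) (f g : Lam n) : iprod f (c • g) = c • iprod f g := by
  funext u
  simp only [iprod, Pi.smul_apply, smul_eq_mul, mul_sum, mul_ite, mul_zero]
  exact sum_congr rfl fun s _ => by split_ifs <;> ring

end Clifford

section mOp

variable {n : ℕ}

lemma mOp_wedge_basisVec_add (j : Fin (n + 1)) (f : Lam n) :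
    mOp (wedge (basisVec j) f) + wedge (basisVec j) (mOp f) = if 0 = j then f else 0 := by
  rw [mOp, mOp, wedge_add_right]
  linear_combination (norm := abel)
    wedge_basisVec_anticomm 0 j f + iprod_basisVec_wedge_basisVec_add 0 j f

lemma mOp_iprod_basisVec_add (j : Fin (n + 1)) (f : Lam n) :
    mOp (iprod (basisVec j) f) + iprod (basisVec j) (mOp f) = if j = 0 then f else 0 := by
  rw [mOp, mOp, iprod_add_right]
  linear_combination (norm := abel)
    iprod_basisVec_wedge_basisVec_add j 0 f + iprod_basisVec_anticomm 0 j f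

lemma mOp_mOp (f : Lam n) : mOp (mOp f) = f := by
  rw [mOp, mOp, wedge_add_right, iprod_add_right, wedge_basisVec_wedge_basisVec_self,
    iprod_basisVec_iprod_basisVec_self]
  simpa [add_comm] using iprod_basisVec_wedge_basisVec_add (0 : Fin (n + 1)) 0 f

variable (n) in
def mOpLinear : Lam n →ₗ[ℂ] Lam n where
  toFun := mOp
  map_add' f g := by
    simp only [mOp, wedge_add_right, iprod_add_right]
    abel
  map_smul' c f := by
    simp only [mOp, wedge_smul_right, iprod_smul_right, smul_add, RingHom.id_apply]

@[simp]
lemma mOpLinear_apply (f : Lam n) : mOpLinear n f = mOp f := rfl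

variable (n) in
def mOpEquiv : Lam n ≃L[ℝ] Lam n :=
  ((LinearEquiv.ofInvolutive (mOpLinear n) mOp_mOp).restrictScalars ℝ).toContinuousLinearEquiv

/-- `fderiv` commutes with a continuous linear equivalence also at points where `F` is not
differentiable, both sides being `0` there. -/
lemma pderiv_mOp (j : Fin (n + 1)) (F : (Fin (n + 1) → ℝ) → Lam n) (x : Fin (n + 1) → ℝ) :
    pderiv j (fun y => mOp (F y)) x = mOp (pderiv j F x) :=
  congrArg (· (Pi.single j 1)) ((mOpEquiv n).comp_fderiv (f := F) (x := x))

end mOp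

theorem stmt2_general (n : ℕ) (F : (Fin (n + 1) → ℝ) → Lam n) :
    ∀ x : Fin (n + 1) → ℝ,
      mOp (dtx F x) + dtx (fun y => mOp (F y)) x = pderiv 0 F x ∧
      mOp (dstx F x) + dstx (fun y => mOp (F y)) x = -pderiv 0 F x := by
  intro x
  constructor
  · calc mOp (dtx F x) + dtx (fun y => mOp (F y)) x
        = ∑ j, (mOp (wedge (basisVec j) (pderiv j F x)) +
            wedge (basisVec j) (mOp (pderiv j F x))) := by
          rw [dtx, dtx, ← mOpLinear_apply, map_sum]
          simp only [mOpLinear_apply, pderiv_mOp, sum_add_distrib]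
      _ = pderiv 0 F x := by simp [mOp_wedge_basisVec_add]
  · calc mOp (dstx F x) + dstx (fun y => mOp (F y)) x
        = -∑ j, (mOp (iprod (basisVec j) (pderiv j F x)) +
            iprod (basisVec j) (mOp (pderiv j F x))) := by
          rw [dstx, dstx, ← mOpLinear_apply, map_neg, map_sum]
          simp only [mOpLinear_apply, pderiv_mOp, sum_add_distrib, neg_add]
      _ = -pderiv 0 F x := by simp [mOp_iprod_basisVec_add]

/-- For `F : ℝ^{n+1} → Λ` continuously differentiable one has, pointwise,
`m(d_{t,x}F) + d_{t,x}(mF) = ∂₀F` and `m(d*_{t,x}F) + d*_{t,x}(mF) = −∂₀F`. -/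
theorem stmt2 (n : ℕ) (F : (Fin (n + 1) → ℝ) → Lam n) (hF : ContDiff ℝ 1 F) :
    ∀ x : Fin (n + 1) → ℝ,
      mOp (dtx F x) + dtx (fun y => mOp (F y)) x = pderiv 0 F x ∧
      mOp (dstx F x) + dstx (fun y => mOp (F y)) x = -pderiv 0 F x :=
  stmt2_general n F
end
end

section
/- Let H be a complex Hilbert space, let V and W be closed subspaces of H, and let c ∈ [0,1) be such that |⟨u, w⟩| ≤ c‖u‖‖w‖ for all u ∈ V and w ∈ W. Let B be a bounded operator on H with Re⟨Bh, h⟩ ≥ κ‖h‖² for all h ∈ H, where κ > 0, and assume c‖B‖ < κ. Then there is a constant C, depending only on c, κ and ‖B‖, such that for every f ∈ V and every g ∈ H with Bg ∈ W one has ‖f‖ + ‖g‖ ≤ C‖f + g‖. -/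
/-! Write `h = f + g`. Testing accretivity against `g` and splitting `⟪B g, g⟫ = ⟪B g, h⟫ - ⟪B g, f⟫`,
the first term is at most `‖B‖ ‖g‖ ‖h‖`, while transversality (as `B g ∈ W`) bounds the second by
`c ‖B‖ ‖f‖ ‖g‖ ≤ c ‖B‖ (‖h‖ + ‖g‖) ‖g‖`. Hence `(κ - c ‖B‖) ‖g‖ ≤ (1 + c) ‖B‖ ‖h‖`, which controls
`‖g‖`, and then `‖f‖ ≤ ‖h‖ + ‖g‖`. -/

open RCLike

section

variable {𝕜 E : Type*} [RCLike 𝕜] [NormedAddCommGroup E] [InnerProductSpace 𝕜 E]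

lemma sub_mul_norm_le_of_accretive_of_transversal {B : E →L[𝕜] E} {κ c : ℝ} {f g : E}
    (hc : 0 ≤ c) (hacc : κ * ‖g‖ ^ 2 ≤ re (inner 𝕜 (B g) g))
    (htrans : ‖(inner 𝕜 f (B g) : 𝕜)‖ ≤ c * ‖f‖ * ‖B g‖) :
    (κ - c * ‖B‖) * ‖g‖ ≤ (1 + c) * ‖B‖ * ‖f + g‖ := by
  rcases (norm_nonneg g).eq_or_lt with hg | hg
  · rw [← hg, mul_zero]
    positivity
  have hBg : ‖B g‖ ≤ ‖B‖ * ‖g‖ := B.le_opNorm g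
  have hsplit : re (inner 𝕜 (B g) g) = re (inner 𝕜 (B g) (f + g)) - re (inner 𝕜 (B g) f) := by
    rw [inner_add_right, map_add]
    ring
  have hsum : re (inner 𝕜 (B g) (f + g)) ≤ ‖B‖ * ‖g‖ * ‖f + g‖ :=
    (re_inner_le_norm _ _).trans (mul_le_mul_of_nonneg_right hBg (norm_nonneg _))
  have hcross : -re (inner 𝕜 (B g) f) ≤ c * ‖B‖ * (‖f + g‖ + ‖g‖) * ‖g‖ :=
    calc -re (inner 𝕜 (B g) f)
        ≤ ‖(inner 𝕜 (B g) f : 𝕜)‖ := (neg_le_abs _).trans (abs_re_le_norm _)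
      _ ≤ c * ‖f‖ * ‖B g‖ := (norm_inner_symm (𝕜 := 𝕜) (B g) f).trans_le htrans
      _ ≤ c * (‖f + g‖ + ‖g‖) * (‖B‖ * ‖g‖) := by
        gcongr
        exact norm_le_add_norm_add f g
      _ = c * ‖B‖ * (‖f + g‖ + ‖g‖) * ‖g‖ := by ring
  refine le_of_mul_le_mul_right ?_ hg
  linarith

lemma norm_add_norm_le_of_accretive_of_transversal {B : E →L[𝕜] E} {κ c : ℝ} {f g : E}
    (hc : 0 ≤ c) (hcB : c * ‖B‖ < κ) (hacc : κ * ‖g‖ ^ 2 ≤ re (inner 𝕜 (B g) g))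
    (htrans : ‖(inner 𝕜 f (B g) : 𝕜)‖ ≤ c * ‖f‖ * ‖B g‖) :
    ‖f‖ + ‖g‖ ≤ (1 + 2 * ((1 + c) * ‖B‖ / (κ - c * ‖B‖))) * ‖f + g‖ := by
  have hg : ‖g‖ ≤ (1 + c) * ‖B‖ / (κ - c * ‖B‖) * ‖f + g‖ := by
    rw [div_mul_eq_mul_div, le_div_iff₀ (sub_pos.mpr hcB), mul_comm]
    exact sub_mul_norm_le_of_accretive_of_transversal hc hacc htrans
  linarith [norm_le_add_norm_add f g]

end

theorem stmt5_general (c κ M : ℝ) (hc0 : 0 ≤ c)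
    (hcM : c * M < κ) :
    ∃ C : ℝ, ∀ (H : Type) [NormedAddCommGroup H] [InnerProductSpace ℂ H]
      [CompleteSpace H] (V W : Submodule ℂ H),
      IsClosed (V : Set H) → IsClosed (W : Set H) →
      (∀ u ∈ V, ∀ w ∈ W, ‖(inner ℂ u w : ℂ)‖ ≤ c * ‖u‖ * ‖w‖) →
      ∀ B : H →L[ℂ] H, ‖B‖ = M →
      (∀ h : H, κ * ‖h‖ ^ 2 ≤ (inner ℂ (B h) h : ℂ).re) →
      ∀ f ∈ V, ∀ g : H, B g ∈ W → ‖f‖ + ‖g‖ ≤ C * ‖f + g‖ := by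
  refine ⟨1 + 2 * ((1 + c) * M / (κ - c * M)), ?_⟩
  intro H _ _ _ V W _ _ htrans B hB hacc f hf g hg
  subst hB
  exact norm_add_norm_le_of_accretive_of_transversal hc0 hcM (hacc g) (htrans f hf (B g) hg)

/-- If `V, W` are closed subspaces of a complex Hilbert space `H` which are
transversal with constant `c < 1`, and if `B` is a bounded accretive operator
with constant `κ > 0` satisfying `c‖B‖ < κ`, then there is a constant `C`
(depending only on `c`, `κ` and `‖B‖`) such that `‖f‖ + ‖g‖ ≤ C‖f + g‖`
whenever `f ∈ V` and `Bg ∈ W`. -/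
theorem stmt5 (c κ M : ℝ) (hc0 : 0 ≤ c) (hc1 : c < 1) (hκ : 0 < κ)
    (hcM : c * M < κ) :
    ∃ C : ℝ, ∀ (H : Type) [NormedAddCommGroup H] [InnerProductSpace ℂ H]
      [CompleteSpace H] (V W : Submodule ℂ H),
      IsClosed (V : Set H) → IsClosed (W : Set H) →
      (∀ u ∈ V, ∀ w ∈ W, ‖(inner ℂ u w : ℂ)‖ ≤ c * ‖u‖ * ‖w‖) →
      ∀ B : H →L[ℂ] H, ‖B‖ = M →
      (∀ h : H, κ * ‖h‖ ^ 2 ≤ (inner ℂ (B h) h : ℂ).re) →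
      ∀ f ∈ V, ∀ g : H, B g ∈ W → ‖f‖ + ‖g‖ ≤ C * ‖f + g‖ :=
  stmt5_general c κ M hc0 hcM
end

section
/- Let H be a complex Hilbert space, let V and W be closed subspaces, and let c ∈ [0,1) be such that |⟨u, w⟩| ≤ c‖u‖‖w‖ for all u ∈ V, w ∈ W, and also |⟨u, w⟩| ≤ c‖u‖‖w‖ for all u ∈ V^⊥, w ∈ W^⊥ (orthogonal complements). Let B be a bounded operator on H with Re⟨Bh, h⟩ ≥ κ‖h‖² for all h (κ > 0) and assume c‖B‖ < κ. Then H splits topologically: every h ∈ H can be written uniquely as h = f + g with f ∈ V and Bg ∈ W, and there is a constant C depending only on c, κ, ‖B‖ with ‖f‖ + ‖g‖ ≤ C‖h‖. -/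
/-! Let `T : V → Wᗮ` be the compression `f ↦ P_{Wᗮ} (B f)`. Splitting `B f` along `Wᗮ ⊕ W`,
accretivity and the transversality of `V` and `W` give `(κ - c‖B‖) ‖f‖ ≤ ‖T f‖`; the same argument
for `B†` and the transversal pair `Wᗮ, Vᗮ` bounds `T† = P_V B†|_{Wᗮ}` from below. So `T` is bounded
below with dense range, hence invertible, and `h = f + g` with `f ∈ V`, `B g ∈ W` holds exactly
when `T f = P_{Wᗮ} (B h)`. -/

open scoped InnerProductSpace InnerProduct

variable {𝕜 E F : Type*} [RCLike 𝕜] [NormedAddCommGroup E] [InnerProductSpace 𝕜 E]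
  [NormedAddCommGroup F] [InnerProductSpace 𝕜 F]

namespace ContinuousLinearMap

theorem antilipschitzWith_of_mul_norm_le {T : E →L[𝕜] F} {δ : ℝ} (hδ : 0 < δ)
    (hT : ∀ x, δ * ‖x‖ ≤ ‖T x‖) : AntilipschitzWith (Real.toNNReal δ⁻¹) T :=
  T.antilipschitz_of_bound fun x => by
    rw [Real.coe_toNNReal _ (inv_nonneg.mpr hδ.le), inv_mul_eq_div, le_div_iff₀' hδ]
    exact hT x

theorem surjective_of_antilipschitz_of_injective_adjoint
    [CompleteSpace E] [CompleteSpace F] (T : E →L[𝕜] F) {C : NNReal}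
    (hT : AntilipschitzWith C T) (hT' : Function.Injective (T†)) :
    Function.Surjective T := by
  have : CompleteSpace T.range := hT.completeSpace_range_clm
  have h : T.rangeᗮ = ⊥ := T.orthogonal_range ▸ LinearMap.ker_eq_bot.mpr hT'
  exact LinearMap.range_eq_top.mp (Submodule.orthogonal_eq_bot_iff.mp h)

theorem re_inner_adjoint_apply_self [CompleteSpace E] (B : E →L[𝕜] E) (x : E) :
    RCLike.re ⟪(B†) x, x⟫_𝕜 = RCLike.re ⟪B x, x⟫_𝕜 := by
  rw [adjoint_inner_left, ← inner_conj_symm, RCLike.conj_re]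

noncomputable def compression (B : E →L[𝕜] E) (V U : Submodule 𝕜 E)
    [U.HasOrthogonalProjection] : V →L[𝕜] U :=
  U.orthogonalProjectionOnto ∘L B ∘L V.subtypeL

variable (B : E →L[𝕜] E) (V U : Submodule 𝕜 E) [U.HasOrthogonalProjection]

@[simp]
theorem compression_apply (f : V) :
    B.compression V U f = U.orthogonalProjectionOnto (B f) := rfl

theorem adjoint_compression [CompleteSpace E] [CompleteSpace V] [CompleteSpace U] :
    (B.compression V U)† = B†.compression U V := by
  simp only [compression, adjoint_comp, V.adjoint_subtypeL, U.adjoint_orthogonalProjectionOnto,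
    comp_assoc]

variable {V U}

theorem compression_eq_orthogonalProjectionOnto_iff (f : V) (h : E) :
    B.compression V U f = U.orthogonalProjectionOnto (B h) ↔ B (h - f) ∈ Uᗮ := by
  rw [eq_comm, ← sub_eq_zero, compression_apply, ← map_sub, ← map_sub,
    Submodule.orthogonalProjectionOnto_eq_zero_iff]

theorem sub_mul_norm_le_norm_compression {c κ : ℝ} (hc : 0 ≤ c)
    (hacc : ∀ x ∈ V, κ * ‖x‖ ^ 2 ≤ RCLike.re ⟪B x, x⟫_𝕜)
    (htr : ∀ u ∈ V, ∀ w ∈ Uᗮ, ‖⟪u, w⟫_𝕜‖ ≤ c * ‖u‖ * ‖w‖) (f : V) :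
    (κ - c * ‖B‖) * ‖f‖ ≤ ‖B.compression V U f‖ := by
  set p := U.orthogonalProjectionOnto (B f)
  set r := Uᗮ.orthogonalProjectionOnto (B f)
  have hr : ‖r‖ ≤ ‖B‖ * ‖f‖ :=
    (Uᗮ.norm_orthogonalProjectionOnto_apply_le _).trans (B.le_opNorm f)
  have hp : RCLike.re ⟪(p : E), f⟫_𝕜 ≤ ‖p‖ * ‖f‖ :=
    (RCLike.re_le_norm _).trans (norm_inner_le_norm _ _)
  have hr' : RCLike.re ⟪(r : E), f⟫_𝕜 ≤ c * ‖B‖ * ‖f‖ ^ 2 :=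
    calc RCLike.re ⟪(r : E), f⟫_𝕜 ≤ ‖⟪(f : E), r⟫_𝕜‖ :=
          (RCLike.re_le_norm _).trans (norm_inner_symm _ _).le
      _ ≤ c * ‖f‖ * ‖r‖ := htr f f.2 r r.2
      _ ≤ c * ‖f‖ * (‖B‖ * ‖f‖) := by gcongr
      _ = c * ‖B‖ * ‖f‖ ^ 2 := by ring
  have hsplit : B f = p + r := (U.starProjection_add_starProjection_orthogonal _).symm
  have hacc_f : κ * ‖f‖ ^ 2 ≤ RCLike.re ⟪(p : E), f⟫_𝕜 + RCLike.re ⟪(r : E), f⟫_𝕜 := by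
    rw [← map_add, ← inner_add_left, ← hsplit]
    exact hacc f f.2
  have key : (κ - c * ‖B‖) * ‖f‖ * ‖f‖ ≤ ‖p‖ * ‖f‖ := by nlinarith
  rcases (norm_nonneg f).eq_or_lt with hf | hf
  · simp [← hf]
  · exact le_of_mul_le_mul_right key hf

end ContinuousLinearMap

section Decomposition

variable {V W : Submodule 𝕜 E} [W.HasOrthogonalProjection]
  {B : E →L[𝕜] E} {δ : ℝ}

theorem compression_eq_of_eq_add {f g h : E} (hf : f ∈ V) (hg : B g ∈ W) (hfg : h = f + g) :
    B.compression V Wᗮ ⟨f, hf⟩ = Wᗮ.orthogonalProjectionOnto (B h) := by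
  rwa [B.compression_eq_orthogonalProjectionOnto_iff, W.orthogonal_orthogonal, hfg,
    add_sub_cancel_left]

theorem existsUnique_add_mem_and_apply_mem [CompleteSpace E] [CompleteSpace V] (hδ : 0 < δ)
    (hT : ∀ f : V, δ * ‖f‖ ≤ ‖B.compression V Wᗮ f‖)
    (hT' : ∀ y : Wᗮ, δ * ‖y‖ ≤ ‖(B†).compression Wᗮ V y‖) (h : E) :
    ∃! p : E × E, p.1 ∈ V ∧ B p.2 ∈ W ∧ h = p.1 + p.2 := by
  have hanti := ContinuousLinearMap.antilipschitzWith_of_mul_norm_le hδ hT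
  have hinj' := (ContinuousLinearMap.antilipschitzWith_of_mul_norm_le hδ hT').injective
  rw [← B.adjoint_compression] at hinj'
  obtain ⟨f, hf⟩ := (B.compression V Wᗮ).surjective_of_antilipschitz_of_injective_adjoint hanti
    hinj' (Wᗮ.orthogonalProjectionOnto (B h))
  have hfW : B (h - f) ∈ W := by
    rw [← W.orthogonal_orthogonal, ← B.compression_eq_orthogonalProjectionOnto_iff]
    exact hf
  refine ⟨(f, h - f), ⟨f.2, hfW, (add_sub_cancel _ _).symm⟩, ?_⟩
  rintro ⟨f', g'⟩ ⟨hf', hg', rfl⟩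
  obtain rfl : (⟨f', hf'⟩ : V) = f :=
    hanti.injective ((compression_eq_of_eq_add hf' hg' rfl).trans hf.symm)
  simp

theorem norm_add_norm_le_of_eq_add (hδ : 0 < δ)
    (hT : ∀ f : V, δ * ‖f‖ ≤ ‖B.compression V Wᗮ f‖) {f g h : E} (hf : f ∈ V) (hg : B g ∈ W)
    (hfg : h = f + g) :
    ‖f‖ + ‖g‖ ≤ (1 + 2 * ‖B‖ / δ) * ‖h‖ := by
  have hf_le : ‖f‖ ≤ ‖B‖ / δ * ‖h‖ := by
    rw [div_mul_eq_mul_div, le_div_iff₀' hδ]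
    calc δ * ‖f‖ ≤ ‖B.compression V Wᗮ ⟨f, hf⟩‖ := hT ⟨f, hf⟩
      _ = ‖Wᗮ.orthogonalProjectionOnto (B h)‖ := by rw [compression_eq_of_eq_add hf hg hfg]
      _ ≤ ‖B h‖ := Wᗮ.norm_orthogonalProjectionOnto_apply_le _
      _ ≤ ‖B‖ * ‖h‖ := B.le_opNorm h
  have hg_le : ‖g‖ ≤ ‖h‖ + ‖f‖ :=
    calc ‖g‖ = ‖h - f‖ := by rw [hfg, add_sub_cancel_left]
      _ ≤ ‖h‖ + ‖f‖ := norm_sub_le _ _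
  calc ‖f‖ + ‖g‖ ≤ ‖h‖ + 2 * ‖f‖ := by linarith
    _ ≤ ‖h‖ + 2 * (‖B‖ / δ * ‖h‖) := by gcongr
    _ = (1 + 2 * ‖B‖ / δ) * ‖h‖ := by ring

end Decomposition

theorem stmt6_general (c κ M : ℝ) (hc0 : 0 ≤ c)
    (hcM : c * M < κ) :
    ∃ C : ℝ, ∀ (H : Type) [NormedAddCommGroup H] [InnerProductSpace ℂ H]
      [CompleteSpace H] (V W : Submodule ℂ H),
      IsClosed (V : Set H) → IsClosed (W : Set H) →
      (∀ u ∈ V, ∀ w ∈ W, ‖(inner ℂ u w : ℂ)‖ ≤ c * ‖u‖ * ‖w‖) →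
      (∀ u ∈ Vᗮ, ∀ w ∈ Wᗮ, ‖(inner ℂ u w : ℂ)‖ ≤ c * ‖u‖ * ‖w‖) →
      ∀ B : H →L[ℂ] H, ‖B‖ = M →
      (∀ h : H, κ * ‖h‖ ^ 2 ≤ (inner ℂ (B h) h : ℂ).re) →
      ∀ h : H,
        (∃! p : H × H, p.1 ∈ V ∧ B p.2 ∈ W ∧ h = p.1 + p.2) ∧
        (∀ f g : H, f ∈ V → B g ∈ W → h = f + g → ‖f‖ + ‖g‖ ≤ C * ‖h‖) := by
  refine ⟨1 + 2 * M / (κ - c * M), fun H _ _ _ V W hV hW hVW hVW' B hB hacc h => ?_⟩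
  have : CompleteSpace V := hV.completeSpace_coe
  have : CompleteSpace W := hW.completeSpace_coe
  have hδ : 0 < κ - c * M := sub_pos.mpr hcM
  have hT : ∀ f : V, (κ - c * M) * ‖f‖ ≤ ‖B.compression V Wᗮ f‖ := hB ▸
    B.sub_mul_norm_le_norm_compression hc0 (fun x _ => hacc x) (by rwa [W.orthogonal_orthogonal])
  have hT' : ∀ y : Wᗮ, (κ - c * M) * ‖y‖ ≤ ‖(B†).compression Wᗮ V y‖ := by
    rw [← hB, ← ContinuousLinearMap.adjoint.norm_map B]
    refine (B†).sub_mul_norm_le_norm_compression hc0 (fun x _ => ?_) (fun y hy w hw => ?_)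
    · rw [ContinuousLinearMap.re_inner_adjoint_apply_self]
      exact hacc x
    · rw [norm_inner_symm, mul_right_comm]
      exact hVW' w hw y hy
  refine ⟨existsUnique_add_mem_and_apply_mem hδ hT hT' h, fun f g hf hg hfg => ?_⟩
  simpa only [hB] using norm_add_norm_le_of_eq_add hδ hT hf hg hfg

/-- If `V, W` are closed subspaces of a complex Hilbert space `H` such that both
the pair `V, W` and the pair `V^⊥, W^⊥` are transversal with constant `c < 1`,
and if `B` is bounded and accretive with constant `κ > 0` and `c‖B‖ < κ`, then
every `h ∈ H` is uniquely `h = f + g` with `f ∈ V`, `Bg ∈ W`, and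
`‖f‖ + ‖g‖ ≤ C‖h‖` with `C` depending only on `c`, `κ`, `‖B‖`. -/
theorem stmt6 (c κ M : ℝ) (hc0 : 0 ≤ c) (hc1 : c < 1) (hκ : 0 < κ)
    (hcM : c * M < κ) :
    ∃ C : ℝ, ∀ (H : Type) [NormedAddCommGroup H] [InnerProductSpace ℂ H]
      [CompleteSpace H] (V W : Submodule ℂ H),
      IsClosed (V : Set H) → IsClosed (W : Set H) →
      (∀ u ∈ V, ∀ w ∈ W, ‖(inner ℂ u w : ℂ)‖ ≤ c * ‖u‖ * ‖w‖) →
      (∀ u ∈ Vᗮ, ∀ w ∈ Wᗮ, ‖(inner ℂ u w : ℂ)‖ ≤ c * ‖u‖ * ‖w‖) →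
      ∀ B : H →L[ℂ] H, ‖B‖ = M →
      (∀ h : H, κ * ‖h‖ ^ 2 ≤ (inner ℂ (B h) h : ℂ).re) →
      ∀ h : H,
        (∃! p : H × H, p.1 ∈ V ∧ B p.2 ∈ W ∧ h = p.1 + p.2) ∧
        (∀ f g : H, f ∈ V → B g ∈ W → h = f + g → ‖f‖ + ‖g‖ ≤ C * ‖h‖) :=
  stmt6_general c κ M hc0 hcM
end

section
/- Let H be a complex Hilbert space, let N^- be an orthogonal projection on H and N^+ := I − N^-. Let B be a bounded operator on H with Re⟨Bh, h⟩ ≥ κ‖h‖² for all h ∈ H, where κ > 0. Then B is invertible, the operator M_B := N^+ − B^{-1}N^-B is invertible, and the following commutation identities hold: (B^{-1}N^-B)M_B^{-1} = M_B^{-1}N^-, N^-M_B^{-1} = M_B^{-1}(B^{-1}N^-B), (B^{-1}N^+B)M_B^{-1} = M_B^{-1}N^+, and N^+M_B^{-1} = M_B^{-1}(B^{-1}N^+B). -/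
/-!
An accretive operator on a Hilbert space is bounded below and has dense range, hence is
invertible. Splitting `H = N⁻H ⊕ N⁺H` gives `B M_B = N⁺BN⁺ − N⁻BN⁻`, so
`M_B = B⁻¹ (N⁺BN⁺ + N⁻BN⁻) (1 − 2N⁻)`: the pinching `N⁺BN⁺ + N⁻BN⁻` is accretive with the same
constant (Pythagoras), and `1 − 2N⁻` is an involution. The commutation identities are the
inverted forms of `M_B P = N⁻ M_B` and `M_B N⁻ = P M_B` for `P = B⁻¹N⁻B`, which hold for any two
idempotents `N⁻` and `P` with `M_B = 1 − N⁻ − P`.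
-/

section Ring

variable {R : Type*} [Ring R] {n p b b' : R}

theorem IsIdempotentElem.mul_mul_of_mul_eq_one (hn : IsIdempotentElem n) (hb : b * b' = 1) :
    IsIdempotentElem (b' * n * b) := by
  simp only [IsIdempotentElem, mul_assoc, ← mul_assoc b b', hb, one_mul]
  rw [← mul_assoc n n, hn.eq]

theorem IsIdempotentElem.isUnit_one_sub_two_mul (hn : IsIdempotentElem n) :
    IsUnit (1 - 2 * n) := by
  have h : (1 - 2 * n) * (1 - 2 * n) = 1 := by
    simp only [two_mul, mul_sub, sub_mul, mul_add, add_mul, one_mul, mul_one, hn.eq]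
    abel
  exact ⟨⟨_, _, h, h⟩, rfl⟩

theorem IsIdempotentElem.semiconjBy_one_sub_sub_left (hn : IsIdempotentElem n)
    (hp : IsIdempotentElem p) : SemiconjBy (1 - n - p) p n := by
  simp only [SemiconjBy, sub_mul, mul_sub, one_mul, mul_one, hp.eq, hn.eq]
  abel

theorem IsIdempotentElem.semiconjBy_one_sub_sub_right (hn : IsIdempotentElem n)
    (hp : IsIdempotentElem p) : SemiconjBy (1 - n - p) n p := by
  simp only [SemiconjBy, sub_mul, mul_sub, one_mul, mul_one, hp.eq, hn.eq]
  abel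

theorem IsIdempotentElem.mul_one_sub_sub_conj_eq (hn : IsIdempotentElem n) (hb : b * b' = 1) :
    b * (1 - n - b' * n * b) = ((1 - n) * b * (1 - n) + n * b * n) * (1 - 2 * n) := by
  have h₁ : (1 - n) * (1 - 2 * n) = 1 - n := by
    simp only [two_mul, mul_sub, sub_mul, one_mul, mul_one, mul_add, hn.eq]; abel
  have h₂ : n * (1 - 2 * n) = -n := by
    simp only [two_mul, mul_sub, mul_one, mul_add, hn.eq]; abel
  rw [add_mul, mul_assoc ((1 - n) * b), h₁, mul_assoc (n * b), h₂, mul_sub b, ← mul_assoc b,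
    ← mul_assoc b, hb, one_mul]
  noncomm_ring

end Ring

section Accretive

open RCLike
open scoped InnerProductSpace

variable {𝕜 E : Type*} [RCLike 𝕜] [NormedAddCommGroup E] [InnerProductSpace 𝕜 E]
  [CompleteSpace E]

theorem IsStarProjection.norm_sq_add_norm_sq_one_sub {p : E →L[𝕜] E}
    (hp : IsStarProjection p) (x : E) : ‖p x‖ ^ 2 + ‖(1 - p) x‖ ^ 2 = ‖x‖ ^ 2 := by
  obtain ⟨K, _, rfl⟩ := isStarProjection_iff_eq_starProjection.mp hp
  rw [← K.starProjection_orthogonal', K.norm_sq_eq_add_norm_sq_starProjection x]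

def IsAccretiveWith (κ : ℝ) (B : E →L[𝕜] E) : Prop :=
  ∀ x, κ * ‖x‖ ^ 2 ≤ re ⟪B x, x⟫_𝕜

namespace IsAccretiveWith

variable {κ : ℝ} {B p : E →L[𝕜] E}

theorem isUnit (hB : IsAccretiveWith κ B) (hκ : 0 < κ) : IsUnit B :=
  B.isUnit_of_forall_le_norm_inner_map (c := ⟨κ, hκ.le⟩) hκ fun x =>
    (mul_comm _ _).trans_le <| (hB x).trans (re_le_norm _)

theorem mul_le_re_inner_compression (hB : IsAccretiveWith κ B) (hp : IsSelfAdjoint p) (x : E) :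
    κ * ‖p x‖ ^ 2 ≤ re ⟪(p * B * p) x, x⟫_𝕜 := by
  have h : ⟪(p * B * p) x, x⟫_𝕜 = ⟪B (p x), p x⟫_𝕜 := hp.isSymmetric (B (p x)) x
  exact h ▸ hB (p x)

theorem pinching (hB : IsAccretiveWith κ B) (hp : IsStarProjection p) :
    IsAccretiveWith κ ((1 - p) * B * (1 - p) + p * B * p) := by
  intro x
  have h₁ := hB.mul_le_re_inner_compression hp.one_sub.isSelfAdjoint x
  have h₂ := hB.mul_le_re_inner_compression hp.isSelfAdjoint x
  rw [add_apply, inner_add_left, map_add, ← hp.norm_sq_add_norm_sq_one_sub x]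
  linarith

end IsAccretiveWith

end Accretive

/-- Let `N⁻` be an orthogonal projection on a complex Hilbert space `H`,
`N⁺ := I − N⁻`, and let `B` be bounded and accretive. Then `B` is invertible,
`M_B := N⁺ − B⁻¹N⁻B` is invertible, and the commutation identities
`(B⁻¹N⁻B)M_B⁻¹ = M_B⁻¹N⁻`, `N⁻M_B⁻¹ = M_B⁻¹(B⁻¹N⁻B)`,
`(B⁻¹N⁺B)M_B⁻¹ = M_B⁻¹N⁺` and `N⁺M_B⁻¹ = M_B⁻¹(B⁻¹N⁺B)` hold. -/
theorem stmt7 (H : Type*) [NormedAddCommGroup H] [InnerProductSpace ℂ H]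
    [CompleteSpace H] (Nm : H →L[ℂ] H) (hidem : Nm * Nm = Nm)
    (hsa : IsSelfAdjoint Nm) (B : H →L[ℂ] H) (κ : ℝ) (hκ : 0 < κ)
    (hacc : ∀ h : H, κ * ‖h‖ ^ 2 ≤ (inner ℂ (B h) h : ℂ).re) :
    IsUnit B ∧
    (∀ B' : H →L[ℂ] H, B' * B = 1 → B * B' = 1 →
      ∀ MB : H →L[ℂ] H, MB = (1 - Nm) - B' * Nm * B →
        IsUnit MB ∧
        ∀ MB' : H →L[ℂ] H, MB' * MB = 1 → MB * MB' = 1 →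
          (B' * Nm * B) * MB' = MB' * Nm ∧
          Nm * MB' = MB' * (B' * Nm * B) ∧
          (B' * (1 - Nm) * B) * MB' = MB' * (1 - Nm) ∧
          (1 - Nm) * MB' = MB' * (B' * (1 - Nm) * B)) := by
  have hN : IsStarProjection Nm := ⟨hidem, hsa⟩
  have hB : IsAccretiveWith κ B := hacc
  refine ⟨hB.isUnit hκ, ?_⟩
  rintro B' hB'B hBB' _ rfl
  set P := B' * Nm * B
  refine ⟨?_, fun MB' hM'M hMM' => ?_⟩
  · have hfactor :
        1 - Nm - P = B' * (((1 - Nm) * B * (1 - Nm) + Nm * B * Nm) * (1 - 2 * Nm)) := by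
      rw [← hN.isIdempotentElem.mul_one_sub_sub_conj_eq hBB', ← mul_assoc, hB'B, one_mul]
    rw [hfactor]
    exact (Units.isUnit ⟨B', B, hB'B, hBB'⟩).mul <| ((hB.pinching hN).isUnit hκ).mul
      hN.isIdempotentElem.isUnit_one_sub_two_mul
  · have hP : IsIdempotentElem P := hN.isIdempotentElem.mul_mul_of_mul_eq_one hBB'
    let u : (H →L[ℂ] H)ˣ := ⟨1 - Nm - P, MB', hMM', hM'M⟩
    have h₁ : SemiconjBy MB' Nm P :=
      (hN.isIdempotentElem.semiconjBy_one_sub_sub_left hP).units_inv_symm_left (a := u)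
    have h₂ : SemiconjBy MB' P Nm :=
      (hN.isIdempotentElem.semiconjBy_one_sub_sub_right hP).units_inv_symm_left (a := u)
    have hcompl : B' * (1 - Nm) * B = 1 - P := by rw [mul_one_sub, sub_mul, hB'B]
    rw [hcompl]
    exact ⟨h₁.eq.symm, h₂.eq.symm, ((SemiconjBy.one_right _).sub_right h₁).eq.symm,
      ((SemiconjBy.one_right _).sub_right h₂).eq.symm⟩
end

section
/- Let E and N be reflection operators on a complex Banach space X (E² = N² = I), and write E^± := ½(I ± E), N^± := ½(I ± N). Let α^+, α^- ∈ ℂ with α^+ ≠ α^-, and set λ := (α^+ + α^-)/(α^+ − α^-). Then for all f, g ∈ X, the pair of equations N^+(α^-E^+ − α^+E^-)f = N^+g and N^-(α^+E^+ − α^-E^-)f = N^-g holds if and only if (λI − EN)f = (2/(α^+ − α^-))·Eg. -/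
/-!
The projections `N⁺` and `N⁻ = 1 - N⁺` are complementary, so the two equations together say
exactly `N⁺x + N⁻y = g`; for `x = (α⁻E⁺ - α⁺E⁻)f` and `y = (α⁺E⁺ - α⁻E⁻)f` that sum is
`½((α⁺ + α⁻)Ef - (α⁺ - α⁻)Nf)`. It remains to apply the involution `E` and divide by
`(α⁺ - α⁻)/2`.
-/

open ContinuousLinearMap

section Projection

variable {R M : Type*} [Ring R] [TopologicalSpace M] [AddCommGroup M] [IsTopologicalAddGroup M]
  [Module R M]

theorem IsIdempotentElem.apply_eq_and_one_sub_apply_eq_iff {P : M →L[R] M}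
    (hP : IsIdempotentElem P) (x y g : M) :
    (P x = P g ∧ (1 - P) y = (1 - P) g) ↔ P x + (1 - P) y = g := by
  have hPP : ∀ z, P (P z) = P z := fun z => congrArg (· z) hP.eq
  simp only [sub_apply, one_apply_eq_self]
  constructor
  · rintro ⟨hx, hy⟩
    rw [hx, hy, add_sub_cancel]
  · rintro rfl
    simp only [map_add, map_sub, hPP]
    constructor <;> abel

end Projection

section Reflection

variable {𝕜 M : Type*} [Field 𝕜] [CharZero 𝕜] [AddCommGroup M] [Module 𝕜 M]

theorem inv_two_smul_sub_eq_iff {a b : 𝕜} (hab : a ≠ b) (v w x : M) :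
    (2⁻¹ : 𝕜) • ((a + b) • v - (a - b) • w) = x ↔
      ((a + b) / (a - b)) • v - w = (2 / (a - b)) • x := by
  have hd : a - b ≠ 0 := sub_ne_zero.mpr hab
  have hc : 2 / (a - b) = (2⁻¹ * (a - b))⁻¹ := by rw [mul_inv, inv_inv, div_eq_mul_inv]
  have hv : 2⁻¹ * (a - b) * ((a + b) / (a - b)) = 2⁻¹ * (a + b) := by field_simp
  rw [hc, eq_inv_smul_iff₀ (mul_ne_zero (inv_ne_zero two_ne_zero) hd), smul_sub (2⁻¹ * (a - b)),
    smul_smul, hv]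
  congr! 1
  module

variable [TopologicalSpace M] [IsTopologicalAddGroup M] [ContinuousConstSMul 𝕜 M]

theorem isIdempotentElem_half_one_add {E : M →L[𝕜] M} (hE : E * E = 1) :
    IsIdempotentElem ((2⁻¹ : 𝕜) • (1 + E)) := by
  have hsq : (1 + E) * (1 + E) = (2 : 𝕜) • (1 + E) := by
    rw [add_mul, one_mul, mul_add, mul_one, hE, two_smul]
    abel
  rw [IsIdempotentElem, smul_mul_smul_comm, hsq, smul_smul, mul_assoc,
    inv_mul_cancel₀ two_ne_zero, mul_one]

theorem one_sub_half_one_add (E : M →L[𝕜] M) :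
    1 - (2⁻¹ : 𝕜) • (1 + E) = (2⁻¹ : 𝕜) • (1 - E) := by
  have h2 : (2⁻¹ : 𝕜) + 2⁻¹ = 1 := by rw [← two_mul, mul_inv_cancel₀ two_ne_zero]
  calc 1 - (2⁻¹ : 𝕜) • (1 + E) = ((2⁻¹ : 𝕜) + 2⁻¹) • 1 - (2⁻¹ : 𝕜) • (1 + E) := by
        rw [h2, one_smul]
    _ = _ := by module

theorem half_one_add_apply_add_half_one_sub_apply (E N : M →L[𝕜] M) (a b : 𝕜) (f : M) :
    ((2⁻¹ : 𝕜) • (1 + N)) ((b • (2⁻¹ : 𝕜) • (1 + E) - a • (2⁻¹ : 𝕜) • (1 - E)) f) +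
      ((2⁻¹ : 𝕜) • (1 - N)) ((a • (2⁻¹ : 𝕜) • (1 + E) - b • (2⁻¹ : 𝕜) • (1 - E)) f) =
      (2⁻¹ : 𝕜) • ((a + b) • E f - (a - b) • N f) := by
  simp only [sub_apply, add_apply, smul_apply, one_apply_eq_self, map_add, map_sub, map_smul]
  module

end Reflection

/-- For reflection operators `E, N` on a complex Banach space, jump parameters
`α⁺ ≠ α⁻` and `λ := (α⁺ + α⁻)/(α⁺ − α⁻)`, the pair of equations
`N⁺(α⁻E⁺ − α⁺E⁻)f = N⁺g` and `N⁻(α⁺E⁺ − α⁻E⁻)f = N⁻g` holds if and only if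
`(λI − EN)f = (2/(α⁺ − α⁻))·Eg`. -/
theorem stmt10 (X : Type*) [NormedAddCommGroup X] [NormedSpace ℂ X]
    (E N : X →L[ℂ] X) (hE : E * E = 1) (hN : N * N = 1)
    (Ep Em Np Nm : X →L[ℂ] X)
    (hEp : Ep = (2⁻¹ : ℂ) • ((1 : X →L[ℂ] X) + E))
    (hEm : Em = (2⁻¹ : ℂ) • ((1 : X →L[ℂ] X) - E))
    (hNp : Np = (2⁻¹ : ℂ) • ((1 : X →L[ℂ] X) + N))
    (hNm : Nm = (2⁻¹ : ℂ) • ((1 : X →L[ℂ] X) - N))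
    (ap am : ℂ) (hne : ap ≠ am) (lam : ℂ) (hlam : lam = (ap + am) / (ap - am)) :
    ∀ f g : X,
      (Np ((am • Ep - ap • Em) f) = Np g ∧ Nm ((ap • Ep - am • Em) f) = Nm g) ↔
      (lam • (1 : X →L[ℂ] X) - E * N) f = (2 / (ap - am)) • E g := by
  subst hEp hEm hNp hNm hlam
  intro f g
  have hEinv : Function.Involutive E := fun x => congrArg (· x) hE
  calc _ ↔ (2⁻¹ : ℂ) • ((ap + am) • E f - (ap - am) • N f) = g := by
        rw [← one_sub_half_one_add N,
          (isIdempotentElem_half_one_add hN).apply_eq_and_one_sub_apply_eq_iff,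
          one_sub_half_one_add, half_one_add_apply_add_half_one_sub_apply]
    _ ↔ (2⁻¹ : ℂ) • ((ap + am) • f - (ap - am) • E (N f)) = E g := by
        rw [← hEinv.injective.eq_iff, map_smul, map_sub, map_smul, map_smul, hEinv]
    _ ↔ _ := inv_two_smul_sub_eq_iff hne _ _ _
end

section
/- Let E and N be reflection operators on a complex Hilbert space H (E² = N² = I), with E^± := ½(I ± E), N^± := ½(I ± N), and E^±H, N^±H the ranges of these projections. Then: (a) I − EN is invertible if and only if both restricted projections N^+ : E^-H → N^+H and N^- : E^+H → N^-H are isomorphisms (bounded bijections); (b) I + EN is invertible if and only if both restricted projations N^+ : E^+H → N^+H and N^- : E^-H → N^-H are isomorphisms. -/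
/-!
With respect to the decompositions `H = E⁻H ⊕ E⁺H` and `H = N⁺H ⊕ N⁻H`, the operator
`N⁺E⁻ + N⁻E⁺ = ½(I - NE)` is block diagonal, its two blocks being the restricted projections
`N⁺ : E⁻H → N⁺H` and `N⁻ : E⁺H → N⁻H`; so it is bijective iff both blocks are. By Jacobson's
lemma `I - NE` is invertible iff `I - EN` is, and by the open mapping theorem a bounded operator
is invertible iff it is bijective. Part (b) is part (a) for the reflection `-E`, which swaps
`E⁺` and `E⁻`.
-/

open Function Set

theorem IsUnit.one_sub_mul_comm {R : Type*} [Ring R] {a b : R} (h : IsUnit (1 - a * b)) :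
    IsUnit (1 - b * a) := by
  obtain ⟨u, hu⟩ := h
  refine isUnit_iff_exists.2 ⟨1 + b * ↑u⁻¹ * a, ?_, ?_⟩
  · calc (1 - b * a) * (1 + b * ↑u⁻¹ * a) = 1 - b * a + b * ((1 - a * b) * ↑u⁻¹) * a := by
          noncomm_ring
      _ = 1 := by rw [← hu, Units.mul_inv, mul_one, sub_add_cancel]
  · calc (1 + b * ↑u⁻¹ * a) * (1 - b * a) = 1 - b * a + b * (↑u⁻¹ * (1 - a * b)) * a := by
          noncomm_ring
      _ = 1 := by rw [← hu, Units.inv_mul, mul_one, sub_add_cancel]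

theorem isUnit_one_sub_mul_comm {R : Type*} [Ring R] {a b : R} :
    IsUnit (1 - a * b) ↔ IsUnit (1 - b * a) :=
  ⟨IsUnit.one_sub_mul_comm, IsUnit.one_sub_mul_comm⟩

section HalfReflection

variable {𝕜 A : Type*} [Field 𝕜] [CharZero 𝕜] [Ring A] [Algebra 𝕜 A]

theorem isIdempotentElem_half_one_add_s11 {e : A} (he : e * e = 1) :
    IsIdempotentElem ((2⁻¹ : 𝕜) • (1 + e)) := by
  simp only [IsIdempotentElem, smul_mul_smul_comm, mul_add, add_mul, one_mul, mul_one, he]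
  module

theorem half_one_add_add_half_one_sub (e : A) :
    (2⁻¹ : 𝕜) • (1 + e) + (2⁻¹ : 𝕜) • (1 - e) = 1 := by
  module

theorem half_one_add_mul_half_one_sub_add (e n : A) :
    (2⁻¹ : 𝕜) • (1 + n) * (2⁻¹ : 𝕜) • (1 - e) + (2⁻¹ : 𝕜) • (1 - n) * (2⁻¹ : 𝕜) • (1 + e) =
      (2⁻¹ : 𝕜) • (1 - n * e) := by
  simp only [smul_mul_smul_comm, mul_add, add_mul, mul_sub, sub_mul, one_mul, mul_one]
  module

end HalfReflection

theorem mul_one_sub_add_one_sub_mul_swap {R : Type*} [Ring R] (p q : R) :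
    (1 - q) * (1 - (1 - p)) + (1 - (1 - q)) * (1 - p) = q * (1 - p) + (1 - q) * p := by
  rw [sub_sub_cancel, sub_sub_cancel, add_comm]

namespace Module.End

variable {R M : Type*} [Ring R] [AddCommGroup M] [Module R M] {p q : Module.End R M}

theorem apply_of_mem_range (hp : IsIdempotentElem p) {x : M} (hx : x ∈ range p) : p x = x :=
  (LinearMap.IsIdempotentElem.mem_range_iff hp).1 hx

theorem apply_eq_zero_of_mem_range_one_sub (hp : IsIdempotentElem p) {x : M}
    (hx : x ∈ range ⇑(1 - p)) : p x = 0 := by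
  obtain ⟨y, rfl⟩ := hx
  rw [← mul_apply, hp.mul_one_sub_self, LinearMap.zero_apply]

theorem mul_one_sub_add_apply_of_mem_range (hp : IsIdempotentElem p) {x : M}
    (hx : x ∈ range ⇑(1 - p)) : (q * (1 - p) + (1 - q) * p) x = q x := by
  simp [apply_of_mem_range hp.one_sub hx, apply_eq_zero_of_mem_range_one_sub hp hx]

theorem apply_mul_one_sub_add_apply (hq : IsIdempotentElem q) (x : M) :
    q ((q * (1 - p) + (1 - q) * p) x) = q ((1 - p) x) := by
  rw [LinearMap.add_apply, map_add, mul_apply, mul_apply, ← mul_apply q q, hq.eq,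
    apply_eq_zero_of_mem_range_one_sub hq (mem_range_self _), add_zero]

theorem bijOn_of_bijective_mul_one_sub_add (hp : IsIdempotentElem p) (hq : IsIdempotentElem q)
    (hA : Bijective ⇑(q * (1 - p) + (1 - q) * p)) : BijOn q (range ⇑(1 - p)) (range q) := by
  refine ⟨fun x _ => mem_range_self x, fun x hx y hy hxy => hA.1 ?_, fun y hy => ?_⟩
  · rwa [mul_one_sub_add_apply_of_mem_range hp hx, mul_one_sub_add_apply_of_mem_range hp hy]
  · obtain ⟨x, rfl⟩ := hA.2 y
    exact ⟨(1 - p) x, mem_range_self x, (apply_mul_one_sub_add_apply hq x).symm.trans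
      (apply_of_mem_range hq hy)⟩

theorem bijective_mul_one_sub_add_of_bijOn (hp : IsIdempotentElem p) (hq : IsIdempotentElem q)
    (h₁ : BijOn q (range ⇑(1 - p)) (range q)) (h₂ : BijOn ⇑(1 - q) (range p) (range ⇑(1 - q))) :
    Bijective ⇑(q * (1 - p) + (1 - q) * p) := by
  have hswap := mul_one_sub_add_one_sub_mul_swap p q
  refine ⟨(injective_iff_map_eq_zero _).2 fun x hx => ?_, fun y => ?_⟩
  · have h₁x : q ((1 - p) x) = q 0 := by
      rw [← apply_mul_one_sub_add_apply hq, hx]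
    have h₂x : (1 - q) (p x) = (1 - q) 0 := by
      have := apply_mul_one_sub_add_apply (p := 1 - p) hq.one_sub x
      rwa [hswap, hx, sub_sub_cancel, eq_comm] at this
    have hpx := h₂.injOn (mem_range_self x) ⟨0, map_zero p⟩ h₂x
    have hqx := h₁.injOn (mem_range_self x) ⟨0, map_zero _⟩ h₁x
    rw [← sub_add_cancel x (p x)]
    simpa [hpx] using hqx
  · obtain ⟨u, hu, hqu⟩ := h₁.surjOn (mem_range_self y)
    obtain ⟨v, hv, hqv⟩ := h₂.surjOn (mem_range_self y)
    have hAv := mul_one_sub_add_apply_of_mem_range (q := 1 - q) hp.one_sub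
      (x := v) (by rwa [sub_sub_cancel])
    rw [hswap] at hAv
    refine ⟨u + v, ?_⟩
    rw [map_add, mul_one_sub_add_apply_of_mem_range hp hu, hAv, hqu, hqv, LinearMap.sub_apply,
      one_apply, add_sub_cancel]

theorem bijective_mul_one_sub_add_iff_bijOn (hp : IsIdempotentElem p) (hq : IsIdempotentElem q) :
    Bijective ⇑(q * (1 - p) + (1 - q) * p) ↔
      BijOn q (range ⇑(1 - p)) (range q) ∧ BijOn ⇑(1 - q) (range p) (range ⇑(1 - q)) := by
  refine ⟨fun hA => ⟨bijOn_of_bijective_mul_one_sub_add hp hq hA, ?_⟩,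
    fun h => bijective_mul_one_sub_add_of_bijOn hp hq h.1 h.2⟩
  simpa only [sub_sub_cancel] using bijOn_of_bijective_mul_one_sub_add hp.one_sub hq.one_sub
    (mul_one_sub_add_one_sub_mul_swap p q ▸ hA)

end Module.End

theorem ContinuousLinearMap.isUnit_one_sub_mul_iff_bijOn {𝕜 H : Type*} [NontriviallyNormedField 𝕜]
    [CharZero 𝕜] [NormedAddCommGroup H] [NormedSpace 𝕜 H] [CompleteSpace H] {E N : H →L[𝕜] H}
    (hE : E * E = 1) (hN : N * N = 1) :
    IsUnit (1 - E * N) ↔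
      BijOn ⇑((2⁻¹ : 𝕜) • (1 + N)) (range ⇑((2⁻¹ : 𝕜) • (1 - E))) (range ⇑((2⁻¹ : 𝕜) • (1 + N))) ∧
      BijOn ⇑((2⁻¹ : 𝕜) • (1 - N)) (range ⇑((2⁻¹ : 𝕜) • (1 + E)))
        (range ⇑((2⁻¹ : 𝕜) • (1 - N))) := by
  set p := (2⁻¹ : 𝕜) • (1 + E)
  set q := (2⁻¹ : 𝕜) • (1 + N)
  have hEm : (2⁻¹ : 𝕜) • (1 - E) = 1 - p := eq_sub_of_add_eq' (half_one_add_add_half_one_sub E)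
  have hNm : (2⁻¹ : 𝕜) • (1 - N) = 1 - q := eq_sub_of_add_eq' (half_one_add_add_half_one_sub N)
  calc IsUnit (1 - E * N)
      ↔ IsUnit ((2⁻¹ : 𝕜) • (1 - N * E)) := by
        rw [isUnit_one_sub_mul_comm, ← Units.smul_mk0 (two_ne_zero' 𝕜 |> inv_ne_zero),
          isUnit_smul_iff]
    _ ↔ Bijective ⇑(q * (1 - p) + (1 - q) * p) := by
        rw [← half_one_add_mul_half_one_sub_add, hEm, hNm, isUnit_iff_bijective]
    _ ↔ _ := by
        rw [hEm, hNm]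
        exact Module.End.bijective_mul_one_sub_add_iff_bijOn
          (isIdempotentElem_toLinearMap_iff.2 (isIdempotentElem_half_one_add_s11 hE))
          (isIdempotentElem_toLinearMap_iff.2 (isIdempotentElem_half_one_add_s11 hN))

/-- For reflection operators `E, N` on a complex Hilbert space `H`:
(a) `I − EN` is invertible iff both restricted projections
`N⁺ : E⁻H → N⁺H` and `N⁻ : E⁺H → N⁻H` are isomorphisms (bijections);
(b) `I + EN` is invertible iff both `N⁺ : E⁺H → N⁺H` and
`N⁻ : E⁻H → N⁻H` are isomorphisms. -/
theorem stmt11 (H : Type*) [NormedAddCommGroup H] [InnerProductSpace ℂ H]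
    [CompleteSpace H] (E N : H →L[ℂ] H) (hE : E * E = 1) (hN : N * N = 1)
    (Ep Em Np Nm : H →L[ℂ] H)
    (hEp : Ep = (2⁻¹ : ℂ) • ((1 : H →L[ℂ] H) + E))
    (hEm : Em = (2⁻¹ : ℂ) • ((1 : H →L[ℂ] H) - E))
    (hNp : Np = (2⁻¹ : ℂ) • ((1 : H →L[ℂ] H) + N))
    (hNm : Nm = (2⁻¹ : ℂ) • ((1 : H →L[ℂ] H) - N)) :
    (IsUnit ((1 : H →L[ℂ] H) - E * N) ↔
      (Set.BijOn (fun x => Np x) (Set.range fun x => Em x) (Set.range fun x => Np x) ∧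
       Set.BijOn (fun x => Nm x) (Set.range fun x => Ep x) (Set.range fun x => Nm x))) ∧
    (IsUnit ((1 : H →L[ℂ] H) + E * N) ↔
      (Set.BijOn (fun x => Np x) (Set.range fun x => Ep x) (Set.range fun x => Np x) ∧
       Set.BijOn (fun x => Nm x) (Set.range fun x => Em x) (Set.range fun x => Nm x))) := by
  subst hEp hEm hNp hNm
  refine ⟨ContinuousLinearMap.isUnit_one_sub_mul_iff_bijOn hE hN, ?_⟩
  have h := ContinuousLinearMap.isUnit_one_sub_mul_iff_bijOn (E := -E) (by rwa [neg_mul_neg]) hN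
  rwa [neg_mul, sub_neg_eq_add, sub_neg_eq_add, ← sub_eq_add_neg] at h
end

section
/- Let E and N be reflection operators on a complex Banach space X (E² = N² = I) and suppose E + N is invertible (equivalently, I + EN is invertible, since I + EN = E(E + N)). Then for every g in the range of N^+ := ½(I + N) there exists a unique f in the range of E^+ := ½(I + E) with N^+f = g, and it is given explicitly by f = 2(E + N)^{-1}g. -/
/-!
The ranges of `E⁺` and `N⁺` are the fixed points of `E` and `N`. From `E² = N² = I` one gets
`(E + N)E = N(E + N)`, so `(E + N)⁻¹` carries fixed points of `N` to fixed points of `E`.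
For a fixed point `f` of `E` we have `2N⁺f = f + Nf = (E + N)f`, hence `N⁺f = g` if and only if
`f = 2(E + N)⁻¹g`.
-/

section Ring

variable {R : Type*} [Ring R] {e n : R}

theorem semiconjBy_add_of_mul_self_eq_one (he : e * e = 1) (hn : n * n = 1) :
    SemiconjBy (e + n) e n := by
  rw [SemiconjBy, add_mul, mul_add, he, hn, add_comm]

theorem Ring.inverse_add_mul_eq_mul_inverse_add (he : e * e = 1) (hn : n * n = 1)
    (hs : IsUnit (e + n)) : Ring.inverse (e + n) * n = e * Ring.inverse (e + n) := by
  obtain ⟨u, hu⟩ := hs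
  have := (hu ▸ semiconjBy_add_of_mul_self_eq_one he hn).units_inv_symm_left
  rwa [← hu, Ring.inverse_unit]

end Ring

theorem IsUnit.apply_eq_iff_eq_inverse_apply {F α : Type*} [MonoidWithZero F] [FunLike F α α]
    [IsOneApplyEqSelf F α] [IsMulApplyEqComp F α] {S : F} (hS : IsUnit S) {x y : α} :
    S x = y ↔ x = Ring.inverse S y := by
  constructor
  · rintro rfl
    rw [← mul_apply_eq_comp, Ring.inverse_mul_cancel S hS, one_apply_eq_self]
  · rintro rfl
    rw [← mul_apply_eq_comp, Ring.mul_inverse_cancel S hS, one_apply_eq_self]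

theorem apply_inverse_add_apply_eq_self {F α : Type*} [Ring F] [FunLike F α α]
    [IsMulApplyEqComp F α] {e n : F} (he : e * e = 1) (hn : n * n = 1)
    (hInv : IsUnit (e + n)) {g : α} (hg : n g = g) :
    e (Ring.inverse (e + n) g) = Ring.inverse (e + n) g := by
  rw [← mul_apply_eq_comp, ← Ring.inverse_add_mul_eq_mul_inverse_add he hn hInv,
    mul_apply_eq_comp, hg]

section Reflections

variable {𝕜 X : Type*} [Field 𝕜] [NeZero (2 : 𝕜)] [TopologicalSpace X] [AddCommGroup X]
  [IsTopologicalAddGroup X] [Module 𝕜 X] [ContinuousConstSMul 𝕜 X]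

theorem half_one_add_apply_eq_iff (R : X →L[𝕜] X) (x y : X) :
    ((2⁻¹ : 𝕜) • (1 + R)) x = y ↔ x + R x = (2 : 𝕜) • y := by
  rw [smul_apply, add_apply, one_apply_eq_self, inv_smul_eq_iff₀ two_ne_zero]

theorem mem_range_half_one_add_iff {R : X →L[𝕜] X} (hR : R * R = 1) (x : X) :
    x ∈ Set.range (fun y => ((2⁻¹ : 𝕜) • (1 + R)) y) ↔ R x = x := by
  constructor
  · rintro ⟨y, rfl⟩
    beta_reduce
    rw [smul_apply, add_apply, one_apply_eq_self, map_smul, map_add, ← mul_apply_eq_comp, hR,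
      one_apply_eq_self, add_comm]
  · intro hx
    refine ⟨x, (half_one_add_apply_eq_iff R x x).2 ?_⟩
    rw [hx, two_smul]

variable {E N : X →L[𝕜] X}

theorem half_one_add_apply_eq_iff_of_apply_eq_self (hInv : IsUnit (E + N)) {f g : X}
    (hf : E f = f) :
    ((2⁻¹ : 𝕜) • (1 + N)) f = g ↔ f = (2 : 𝕜) • Ring.inverse (E + N) g := by
  rw [half_one_add_apply_eq_iff, ← map_smul, ← hInv.apply_eq_iff_eq_inverse_apply, add_apply, hf]

end Reflections

/-- Let `E, N` be reflection operators on a complex Banach space `X` with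
`E + N` invertible. Then for every `g` in the range of `N⁺ := ½(I + N)` there
is a unique `f` in the range of `E⁺ := ½(I + E)` with `N⁺f = g`, and it is
given explicitly by `f = 2(E + N)⁻¹g`. -/
theorem stmt12 (X : Type*) [NormedAddCommGroup X] [NormedSpace ℂ X]
    (E N : X →L[ℂ] X) (hE : E * E = 1) (hN : N * N = 1)
    (Ep Np : X →L[ℂ] X)
    (hEp : Ep = (2⁻¹ : ℂ) • ((1 : X →L[ℂ] X) + E))
    (hNp : Np = (2⁻¹ : ℂ) • ((1 : X →L[ℂ] X) + N))
    (hInv : IsUnit (E + N)) :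
    ∀ g ∈ Set.range (fun x => Np x),
      (∃! f : X, f ∈ Set.range (fun x => Ep x) ∧ Np f = g) ∧
      (2 : ℂ) • (Ring.inverse (E + N)) g ∈ Set.range (fun x => Ep x) ∧
      Np ((2 : ℂ) • (Ring.inverse (E + N)) g) = g := by
  subst hEp hNp
  intro g hg
  rw [mem_range_half_one_add_iff hN] at hg
  simp only [mem_range_half_one_add_iff hE]
  have hfixed : E ((2 : ℂ) • Ring.inverse (E + N) g) = (2 : ℂ) • Ring.inverse (E + N) g := by
    rw [map_smul, apply_inverse_add_apply_eq_self hE hN hInv hg]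
  have hsolves := (half_one_add_apply_eq_iff_of_apply_eq_self hInv hfixed).2 rfl
  refine ⟨⟨_, ⟨hfixed, hsolves⟩, fun f ⟨hf, hfg⟩ => ?_⟩, hfixed, hsolves⟩
  exact (half_one_add_apply_eq_iff_of_apply_eq_self hInv hf).1 hfg
end

section
/- Let P₁^±, P₂^± be two pairs of complementary projections on a complex Hilbert space H. Then the following are equivalent: (i) there is c > 0 with ‖P₁^-f‖ ≥ c‖f‖ for all f in the range of P₂^+; (ii) there is c > 0 with ‖P₂^-f‖ ≥ c‖f‖ for all f in the range of P₁^+; (iii) the ranges of P₁^+ and P₂^+ are transversal, i.e. there is C < ∞ with ‖f₁‖ + ‖f₂‖ ≤ C‖f₁ + f₂‖ for all f₁ in the range of P₁^+ and f₂ in the range of P₂^+. -/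
/-!
Since `P⁻` kills the range of `P⁺`, a lower bound for `P⁻` on a subspace `V` bounds `‖f₂‖` by
`‖P⁻(f₁ + f₂)‖ ≲ ‖f₁ + f₂‖`, which gives transversality. Conversely `P⁻f = P⁺(-f) + f` splits
`P⁻f` along the range of `P⁺` and `V`, so transversality gives `‖f‖ ≲ ‖P⁻f‖` on `V`.
Transversality is symmetric, so the second equivalence is the first with the two pairs exchanged.
-/

open Set

section Transversality

variable {E F : Type*} [SeminormedAddCommGroup E] [SeminormedAddCommGroup F]

def IsTransversal (U V : Set E) : Prop :=
  ∃ C : ℝ, ∀ f₁ ∈ U, ∀ f₂ ∈ V, ‖f₁‖ + ‖f₂‖ ≤ C * ‖f₁ + f₂‖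

def IsBoundedBelowOn (T : E → F) (V : Set E) : Prop :=
  ∃ c : ℝ, 0 < c ∧ ∀ f ∈ V, c * ‖f‖ ≤ ‖T f‖

theorem IsTransversal.symm {U V : Set E} (h : IsTransversal U V) : IsTransversal V U := by
  obtain ⟨C, hC⟩ := h
  refine ⟨C, fun f₂ hf₂ f₁ hf₁ => ?_⟩
  rw [add_comm ‖f₂‖, add_comm f₂]
  exact hC f₁ hf₁ f₂ hf₂

theorem isTransversal_comm (U V : Set E) : IsTransversal U V ↔ IsTransversal V U :=
  ⟨IsTransversal.symm, IsTransversal.symm⟩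

theorem IsBoundedBelowOn.isTransversal {𝕜 : Type*} [NontriviallyNormedField 𝕜]
    [NormedSpace 𝕜 E] [NormedSpace 𝕜 F] {T : E →L[𝕜] F} {U V : Set E}
    (hTU : ∀ f ∈ U, T f = 0) (hT : IsBoundedBelowOn T V) : IsTransversal U V := by
  obtain ⟨c, hc, hbound⟩ := hT
  refine ⟨1 + 2 * ‖T‖ / c, fun f₁ hf₁ f₂ hf₂ => ?_⟩
  have hf₂_le : c * ‖f₂‖ ≤ ‖T‖ * ‖f₁ + f₂‖ :=
    calc c * ‖f₂‖ ≤ ‖T f₂‖ := hbound f₂ hf₂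
      _ = ‖T (f₁ + f₂)‖ := by rw [map_add, hTU f₁ hf₁, zero_add]
      _ ≤ ‖T‖ * ‖f₁ + f₂‖ := T.le_opNorm _
  have hf₂_le' : ‖f₂‖ ≤ ‖T‖ / c * ‖f₁ + f₂‖ := by
    rw [div_mul_eq_mul_div, le_div_iff₀ hc]
    linarith
  have hf₁_le : ‖f₁‖ ≤ ‖f₁ + f₂‖ + ‖f₂‖ := by
    simpa using norm_sub_le (f₁ + f₂) f₂
  linarith [show (1 + 2 * ‖T‖ / c) * ‖f₁ + f₂‖ = ‖f₁ + f₂‖ + 2 * (‖T‖ / c * ‖f₁ + f₂‖) by ring]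

theorem IsTransversal.isBoundedBelowOn {T : E → E} {U V : Set E}
    (hsub : ∀ f ∈ V, T f - f ∈ U) (h : IsTransversal U V) : IsBoundedBelowOn T V := by
  obtain ⟨C, hC⟩ := h
  have hC' : 0 < max C 1 := lt_max_of_lt_right one_pos
  refine ⟨(max C 1)⁻¹, inv_pos.mpr hC', fun f hf => ?_⟩
  have hsplit := hC (T f - f) (hsub f hf) f hf
  rw [sub_add_cancel] at hsplit
  have hmax : C * ‖T f‖ ≤ max C 1 * ‖T f‖ :=
    mul_le_mul_of_nonneg_right (le_max_left C 1) (norm_nonneg _)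
  rw [inv_mul_le_iff₀ hC']
  linarith [norm_nonneg (T f - f)]

end Transversality

theorem isBoundedBelowOn_iff_isTransversal_range {𝕜 E : Type*} [NontriviallyNormedField 𝕜]
    [SeminormedAddCommGroup E] [NormedSpace 𝕜 E] {P Q : E →L[𝕜] E} (hsum : P + Q = 1)
    (hQP : Q * P = 0) (V : Set E) :
    IsBoundedBelowOn Q V ↔ IsTransversal (range P) V := by
  constructor
  · exact IsBoundedBelowOn.isTransversal (by
      rintro _ ⟨x, rfl⟩
      exact DFunLike.congr_fun hQP x)
  · refine IsTransversal.isBoundedBelowOn fun f _ => ⟨-f, ?_⟩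
    have hf : P f + Q f = f := DFunLike.congr_fun hsum f
    rw [map_neg, neg_eq_iff_eq_neg, neg_sub]
    exact eq_sub_of_add_eq hf

theorem stmt13_general (H : Type*) [NormedAddCommGroup H] [InnerProductSpace ℂ H]
    (P₁p P₁m P₂p P₂m : H →L[ℂ] H)
    (h₁sum : P₁p + P₁m = 1)
    (h₁mp : P₁m * P₁p = 0)
    (h₂sum : P₂p + P₂m = 1)
    (h₂mp : P₂m * P₂p = 0) :
    ((∃ c : ℝ, 0 < c ∧ ∀ f ∈ Set.range (fun x => P₂p x), c * ‖f‖ ≤ ‖P₁m f‖) ↔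
      (∃ C : ℝ, ∀ f₁ ∈ Set.range (fun x => P₁p x), ∀ f₂ ∈ Set.range (fun x => P₂p x),
        ‖f₁‖ + ‖f₂‖ ≤ C * ‖f₁ + f₂‖)) ∧
    ((∃ c : ℝ, 0 < c ∧ ∀ f ∈ Set.range (fun x => P₁p x), c * ‖f‖ ≤ ‖P₂m f‖) ↔
      (∃ C : ℝ, ∀ f₁ ∈ Set.range (fun x => P₁p x), ∀ f₂ ∈ Set.range (fun x => P₂p x),
        ‖f₁‖ + ‖f₂‖ ≤ C * ‖f₁ + f₂‖)) :=
  ⟨isBoundedBelowOn_iff_isTransversal_range h₁sum h₁mp _,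
    (isBoundedBelowOn_iff_isTransversal_range h₂sum h₂mp _).trans (isTransversal_comm _ _)⟩

/-- For two pairs `P₁^±`, `P₂^±` of complementary projections on a complex
Hilbert space, the following are equivalent: (i) `‖P₁⁻f‖ ≳ ‖f‖` on the range of
`P₂⁺`; (ii) `‖P₂⁻f‖ ≳ ‖f‖` on the range of `P₁⁺`; (iii) the ranges of `P₁⁺`
and `P₂⁺` are transversal: `‖f₁‖ + ‖f₂‖ ≤ C‖f₁ + f₂‖`. -/
theorem stmt13 (H : Type*) [NormedAddCommGroup H] [InnerProductSpace ℂ H]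
    [CompleteSpace H]
    (P₁p P₁m P₂p P₂m : H →L[ℂ] H)
    (h₁sum : P₁p + P₁m = 1) (h₁p : P₁p * P₁p = P₁p) (h₁m : P₁m * P₁m = P₁m)
    (h₁pm : P₁p * P₁m = 0) (h₁mp : P₁m * P₁p = 0)
    (h₂sum : P₂p + P₂m = 1) (h₂p : P₂p * P₂p = P₂p) (h₂m : P₂m * P₂m = P₂m)
    (h₂pm : P₂p * P₂m = 0) (h₂mp : P₂m * P₂p = 0) :
    ((∃ c : ℝ, 0 < c ∧ ∀ f ∈ Set.range (fun x => P₂p x), c * ‖f‖ ≤ ‖P₁m f‖) ↔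
      (∃ C : ℝ, ∀ f₁ ∈ Set.range (fun x => P₁p x), ∀ f₂ ∈ Set.range (fun x => P₂p x),
        ‖f₁‖ + ‖f₂‖ ≤ C * ‖f₁ + f₂‖)) ∧
    ((∃ c : ℝ, 0 < c ∧ ∀ f ∈ Set.range (fun x => P₁p x), c * ‖f‖ ≤ ‖P₂m f‖) ↔
      (∃ C : ℝ, ∀ f₁ ∈ Set.range (fun x => P₁p x), ∀ f₂ ∈ Set.range (fun x => P₂p x),
        ‖f₁‖ + ‖f₂‖ ≤ C * ‖f₁ + f₂‖)) :=
  stmt13_general H P₁p P₁m P₂p P₂m h₁sum h₁mp h₂sum h₂mp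
end
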